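/- All points of a spatial box are threatened with high probability (Corollary 4.6). Let Σ = {z ∈ ℤ^{d+1} : η_z = 1}. Assume η satisfies the α-decoupling property, ℙ(η_0 = 1) ≥ c₂ > 0, and (ω, η) is translation invariant. Then there exists c₇ = c₇(α, c₃, c₂) > 0 such that for every w ∈ ℤ^{d+1} and every positive integer L: ℙ( there exists z ∈ w + ⟦0, L−1⟧^d × {0} such that z is not L-threatened ) ≤ c₇ · L^{-α}. -/
import Mathlib


open MeasureTheory ProbabilityTheory Filter

namespace RWRE

/-- A space-time lattice point `z = (x, t) ∈ ℤ^{d+1}`. -/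
abbrev Pt (d : ℕ) := (Fin d → ℤ) × ℤ

/-- Translation invariance of the pair `(ω, η)`: for any `z ∈ ℤ^{d+1}`, the law of the
shifted fields coincides with the law of `(ω, η)`. -/
def TransInv {d : ℕ} {S Ω : Type*} [MeasurableSpace S] [MeasurableSpace Ω]
    (P : Measure Ω) (ω : Ω → Pt d → S) (η : Ω → Pt d → Bool) : Prop :=
  ∀ z : Pt d,
    Measure.map (fun a => ((fun w => ω a (w + z)), (fun w => η a (w + z)))) P
      = Measure.map (fun a => (ω a, η a)) P

/-- The `α`-decoupling property with constant `c₃` for the field `η`: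
for every `r ∈ ℕ` and all boxes `A = ∏ ⟦al i, au i⟧ × ⟦as₁, as₂⟧`,
`B = ∏ ⟦bl i, bu i⟧ × ⟦bs₁, bs₂⟧` with spatial diameters at most `(2R+1)r`,
heights at most `r` and vertical separation at least `r`, and all `{0,1}`-valued
functions `f₁, f₂` of `η` restricted to `A`, resp. `B`, one has
`𝔼[f₁ f₂] ≤ 𝔼[f₁]𝔼[f₂] + c₃ r^{-α}`. -/
def Decoupling (d R : ℕ) {Ω : Type*} [MeasurableSpace Ω] (P : Measure Ω)
    (η : Ω → Pt d → Bool) (α c₃ : ℝ) : Prop :=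
  ∀ (r : ℕ) (al au bl bu : Fin d → ℤ) (as₁ as₂ bs₁ bs₂ : ℤ),
    (∀ i, au i - al i ≤ (((2 * R + 1) * r : ℕ) : ℤ)) →
    (∀ i, bu i - bl i ≤ (((2 * R + 1) * r : ℕ) : ℤ)) →
    as₂ - as₁ ≤ (r : ℤ) → bs₂ - bs₁ ≤ (r : ℤ) →
    ((r : ℤ) ≤ as₁ - bs₂ ∨ (r : ℤ) ≤ bs₁ - as₂) →
    ∀ f₁ f₂ : (Pt d → Bool) → ℝ, Measurable f₁ → Measurable f₂ →
      (∀ g, f₁ g = 0 ∨ f₁ g = 1) → (∀ g, f₂ g = 0 ∨ f₂ g = 1) →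
      (∀ g g', (∀ z : Pt d, (∀ i, al i ≤ z.1 i ∧ z.1 i ≤ au i) → as₁ ≤ z.2 → z.2 ≤ as₂ →
        g z = g' z) → f₁ g = f₁ g') →
      (∀ g g', (∀ z : Pt d, (∀ i, bl i ≤ z.1 i ∧ z.1 i ≤ bu i) → bs₁ ≤ z.2 → z.2 ≤ bs₂ →
        g z = g' z) → f₂ g = f₂ g') →
      ∫ a, f₁ (η a) * f₂ (η a) ∂P
        ≤ (∫ a, f₁ (η a) ∂P) * (∫ a, f₂ (η a) ∂P) + c₃ * (r : ℝ) ^ (-α)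

/-- The event `F(a,b) = {η_{(0,a)} = ⋯ = η_{(0,b-1)} = 0}`. -/
def emptyRod {d : ℕ} {Ω : Type*} (η : Ω → Pt d → Bool) (a b : ℤ) : Set Ω :=
  {c | ∀ s : ℤ, a ≤ s → s < b → η c (0, s) = false}

/-- `σ : ⟦a,b⟧ → ℤ^{d+1}` is a `K`-allowed path: the last coordinate is time
(`π_{d+1}(σ(s)) = s`) and the spatial coordinates are `K`-Lipschitz for the `ℓ^∞` norm. -/
def AllowedOn (d K : ℕ) (σ : ℤ → Pt d) (a b : ℤ) : Prop :=
  (∀ s : ℤ, a ≤ s → s ≤ b → (σ s).2 = s) ∧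
  (∀ s : ℤ, a ≤ s → s < b → ∀ i, |(σ (s + 1)).1 i - (σ s).1 i| ≤ (K : ℤ))

/-- A point `z = (x,t)` is `H`-threatened with respect to the trap set `T`: there is a
`1`-allowed path `σ : ⟦t, t+H⟧ → ℤ^{d+1}` with `σ(t) = z` passing through a point of `T`. -/
def Threatened {d : ℕ} (T : Set (Pt d)) (H : ℕ) (z : Pt d) : Prop :=
  ∃ σ : ℤ → Pt d, AllowedOn d 1 σ z.2 (z.2 + H) ∧ σ z.2 = z ∧
    ∃ s : ℤ, z.2 ≤ s ∧ s ≤ z.2 + H ∧ σ s ∈ T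

/-- The number of threats `M(σ, H)` along an allowed path `σ : ⟦a,b⟧ → ℤ^{d+1}`:
the number of times `t ∈ ⟦a,b⟧` such that `σ(t)` is `H`-threatened and
`π_{d+1}(σ(t)) ∈ Hℤ`. -/
noncomputable def numThreats {d : ℕ} (T : Set (Pt d)) (H : ℕ) (σ : ℤ → Pt d)
    (a b : ℤ) : ℕ :=
  Set.ncard {t : ℤ | a ≤ t ∧ t ≤ b ∧ Threatened T H (σ t) ∧ (H : ℤ) ∣ (σ t).2}

/-- The trap set `Σ = {z ∈ ℤ^{d+1} : η_z = 1}` associated with a configuration `η`. -/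
def trapSet {d : ℕ} (η : Pt d → Bool) : Set (Pt d) := {z | η z = true}


def moveToward (a b k : ℤ) : ℤ := if a ≤ b then min (a + k) b else max (a - k) b

lemma moveToward_zero (a b : ℤ) : moveToward a b 0 = a := by unfold moveToward; split <;> omega

lemma moveToward_lip (a b k : ℤ) : |moveToward a b (k + 1) - moveToward a b k| ≤ 1 := by
  rw [abs_le]; unfold moveToward; split <;> omega

lemma moveToward_eq (a b k : ℤ) (h : |b - a| ≤ k) : moveToward a b k = b := by
  rw [abs_le] at h; unfold moveToward; split <;> omega

def rodSet (d : ℕ) (c : Fin d → ℤ) (a b : ℤ) : Set (Pt d → Bool) :=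
  {g | ∀ s : ℤ, a ≤ s → s < b → g (c, s) = false}

lemma measurableSet_rodSet {d : ℕ} (c : Fin d → ℤ) (a b : ℤ) :
    MeasurableSet (rodSet d c a b) := by
  have h : rodSet d c a b
      = ⋂ s ∈ {s : ℤ | a ≤ s ∧ s < b}, {g : Pt d → Bool | g (c, s) = false} := by
    ext g; simp only [rodSet, Set.mem_setOf_eq, Set.mem_iInter]; tauto
  rw [h]
  refine MeasurableSet.biInter (Set.to_countable _) fun s _ => ?_
  have : {g : Pt d → Bool | g (c, s) = false}
      = (fun g : Pt d → Bool => g ((c, s) : Pt d)) ⁻¹' {false} := rfl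
  rw [this]
  exact (measurable_pi_apply ((c, s) : Pt d)) (measurableSet_singleton false)

set_option maxHeartbeats 1000000 in
lemma quad_decay (q c₃ β : ℝ) (hq0 : 0 ≤ q) (hq1 : q < 1) (hc₃ : 0 < c₃)
    (hβ0 : 0 < β) (hβ1 : β < 1) (u : ℕ → ℝ)
    (hu0 : ∀ k, 0 ≤ u k) (huq : ∀ k, u k ≤ q)
    (hrec : ∀ k, u (k + 1) ≤ u k ^ 2 + c₃ * β ^ k) :
    ∃ C : ℝ, 0 < C ∧ ∀ k, u k ≤ C * β ^ k := by
  have hq1' : 0 < 1 - q := by linarith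
  have hε : 0 < min (β ^ 2 / 4) ((1 - q) * β / 4) := by positivity
  obtain ⟨K, hK⟩ := exists_pow_lt_of_lt_one (div_pos hε hc₃) hβ1
  have hKc : c₃ * β ^ K < min (β ^ 2 / 4) ((1 - q) * β / 4) := by
    rw [lt_div_iff₀ hc₃] at hK; linarith
  have hmono : ∀ k l : ℕ, k ≤ l → β ^ l ≤ β ^ k := fun k l h =>
    pow_le_pow_of_le_one hβ0.le hβ1.le h
  have hphase1 : ∀ m, u (K + m) ≤ q ^ m + β / 4 := by
    intro m; induction m with
    | zero =>
      have := huq K; simp only [pow_zero, Nat.add_zero]; nlinarith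
    | succ m ih =>
      have h1 := hrec (K + m)
      have h2 : u (K + m) ^ 2 ≤ q * u (K + m) := by nlinarith [hu0 (K + m), huq (K + m)]
      have h3 : c₃ * β ^ (K + m) ≤ (1 - q) * β / 4 := by
        have : β ^ (K + m) ≤ β ^ K := hmono _ _ (by omega)
        nlinarith [min_le_right (β ^ 2 / 4) ((1 - q) * β / 4)]
      have h4 : q * u (K + m) ≤ q * (q ^ m + β / 4) := by nlinarith [huq (K+m), hu0 (K+m)]
      have : u (K + m + 1) ≤ q * (q ^ m + β / 4) + (1 - q) * β / 4 := by linarith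
      calc u (K + (m + 1)) = u (K + m + 1) := by ring_nf
        _ ≤ q * (q ^ m + β / 4) + (1 - q) * β / 4 := this
        _ = q ^ (m + 1) + β / 4 := by ring
  obtain ⟨M, hM⟩ := exists_pow_lt_of_lt_one (show (0:ℝ) < β / 4 by positivity) hq1
  set k₁ := K + M with hk₁
  have hk₁u : u k₁ ≤ β / 2 := by have := hphase1 M; linarith
  have hk₁c : c₃ * β ^ k₁ ≤ β ^ 2 / 4 := by
    have h5 : β ^ k₁ ≤ β ^ K := hmono _ _ (by omega)
    nlinarith [min_le_left (β ^ 2 / 4) ((1 - q) * β / 4)]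
  have hphase2 : ∀ m, u (k₁ + m) ≤ (β / 2) * β ^ m := by
    intro m; induction m with
    | zero => simpa using hk₁u
    | succ m ih =>
      have h1 := hrec (k₁ + m)
      have hb : (0:ℝ) ≤ β ^ m := by positivity
      have hbm1 : β ^ m ≤ 1 := pow_le_one₀ hβ0.le hβ1.le
      have hsplit : β ^ (k₁ + m) = β ^ k₁ * β ^ m := pow_add β k₁ m
      have h2 : u (k₁ + m) ^ 2 ≤ (β / 2) ^ 2 * (β ^ m) ^ 2 := by
        nlinarith [hu0 (k₁ + m)]
      have h3 : c₃ * β ^ (k₁ + m) ≤ β ^ 2 / 4 * β ^ m := by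
        rw [hsplit, ← mul_assoc]; nlinarith
      calc u (k₁ + (m + 1)) = u (k₁ + m + 1) := by ring_nf
        _ ≤ u (k₁ + m) ^ 2 + c₃ * β ^ (k₁ + m) := h1
        _ ≤ (β / 2) ^ 2 * (β ^ m) ^ 2 + β ^ 2 / 4 * β ^ m := by linarith
        _ ≤ (β / 2) * β ^ (m + 1) := by
            have h6 : (β ^ m) ^ 2 ≤ β ^ m := by nlinarith [hb, hbm1]
            have h7 : (β / 2) ^ 2 * (β ^ m) ^ 2 ≤ β ^ 2 / 4 * β ^ m := by nlinarith [sq_nonneg β]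
            have h8 : β ^ 2 / 4 * β ^ m + β ^ 2 / 4 * β ^ m = (β / 2) * β ^ (m + 1) := by ring
            linarith
  refine ⟨(1 + β / 2) / β ^ k₁, by positivity, ?_⟩
  intro k
  have hpk₁ : (0:ℝ) < β ^ k₁ := by positivity
  rcases le_or_gt k₁ k with h | h
  · have h1 := hphase2 (k - k₁)
    rw [Nat.add_sub_cancel' h] at h1
    have hid : β ^ k = β ^ (k - k₁) * β ^ k₁ := by rw [← pow_add, Nat.sub_add_cancel h]
    have h2 : (1 + β / 2) / β ^ k₁ * β ^ k = (1 + β / 2) * β ^ (k - k₁) := by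
      rw [hid]; field_simp
    rw [h2]
    have : (0:ℝ) ≤ β ^ (k - k₁) := by positivity
    nlinarith
  · have h1 : β ^ k₁ ≤ β ^ k := hmono _ _ h.le
    rw [div_mul_eq_mul_div, le_div_iff₀ hpk₁]
    nlinarith [huq k, hu0 k]


lemma shift_inv {d : ℕ} {S Ω : Type*} [MeasurableSpace S] [MeasurableSpace Ω]
    (P : Measure Ω) (ω : Ω → Pt d → S) (η : Ω → Pt d → Bool)
    (hωmeas : Measurable fun a => ω a) (hηmeas : Measurable fun a => η a)
    (hTI : TransInv P ω η) (z : Pt d) (T : Set (Pt d → Bool)) (hT : MeasurableSet T) :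
    P {a | (fun w => η a (w + z)) ∈ T} = P {a | η a ∈ T} := by
  have hshiftS : Measurable (fun g : Pt d → S => fun w => g (w + z)) :=
    measurable_pi_lambda _ fun w => measurable_pi_apply (w + z)
  have hshiftB : Measurable (fun g : Pt d → Bool => fun w => g (w + z)) :=
    measurable_pi_lambda _ fun w => measurable_pi_apply (w + z)
  have hF : Measurable (fun a => ((fun w => ω a (w + z)), (fun w => η a (w + z)))) :=
    (hshiftS.comp hωmeas).prodMk (hshiftB.comp hηmeas)
  have hG : Measurable (fun a => (ω a, η a)) := hωmeas.prodMk hηmeas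
  have hset : MeasurableSet ((Set.univ : Set (Pt d → S)) ×ˢ T) := MeasurableSet.univ.prod hT
  have h1 := congrArg (fun μ : Measure ((Pt d → S) × (Pt d → Bool)) =>
    μ (Set.univ ×ˢ T)) (hTI z)
  rw [Measure.map_apply hF hset, Measure.map_apply hG hset] at h1
  have e1 : (fun a => ((fun w => ω a (w + z)), (fun w => η a (w + z)))) ⁻¹' (Set.univ ×ˢ T)
      = {a | (fun w => η a (w + z)) ∈ T} := by
    ext a; simp [Set.mem_prod]
  have e2 : (fun a => (ω a, η a)) ⁻¹' (Set.univ ×ˢ T) = {a | η a ∈ T} := by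
    ext a; simp [Set.mem_prod]
  rw [e1, e2] at h1; exact h1

lemma rod_trans {d : ℕ} {S Ω : Type*} [MeasurableSpace S] [MeasurableSpace Ω]
    (P : Measure Ω) (ω : Ω → Pt d → S) (η : Ω → Pt d → Bool)
    (hωmeas : Measurable fun a => ω a) (hηmeas : Measurable fun a => η a)
    (hTI : TransInv P ω η) (c : Fin d → ℤ) (t : ℤ) (n : ℕ) :
    P {a | η a ∈ rodSet d c t (t + (n : ℤ))} = P {a | η a ∈ rodSet d 0 0 (n : ℤ)} := by
  have key := shift_inv P ω η hωmeas hηmeas hTI ((c, t) : Pt d) _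
    (measurableSet_rodSet (0 : Fin d → ℤ) 0 (n : ℤ))
  have e : {a | (fun w => η a (w + ((c, t) : Pt d))) ∈ rodSet d 0 0 (n : ℤ)}
      = {a | η a ∈ rodSet d c t (t + (n : ℤ))} := by
    ext a; simp only [Set.mem_setOf_eq, rodSet]
    constructor
    · intro h s hs1 hs2
      have hz : (((0 : Fin d → ℤ), s - t) : Pt d) + (c, t) = (c, s) := by
        rw [Prod.mk_add_mk, Prod.mk.injEq]; exact ⟨zero_add c, by omega⟩
      have h2 := h (s - t) (by omega) (by omega)
      rwa [hz] at h2
    · intro h s hs1 hs2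
      have hz : (((0 : Fin d → ℤ), s) : Pt d) + (c, t) = (c, s + t) := by
        rw [Prod.mk_add_mk, Prod.mk.injEq]; exact ⟨zero_add c, rfl⟩
      simp only [hz]; exact h (s + t) (by omega) (by omega)
  rw [← e]; exact key

lemma integral_ind {d : ℕ} {Ω : Type*} [MeasurableSpace Ω] (P : Measure Ω)
    [IsProbabilityMeasure P] (η : Ω → Pt d → Bool) (hηmeas : Measurable fun a => η a)
    (T : Set (Pt d → Bool)) (hT : MeasurableSet T) :
    ∫ a, T.indicator (fun _ => (1 : ℝ)) (η a) ∂P = (P {a | η a ∈ T}).toReal := by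
  have h : (fun a => T.indicator (fun _ => (1 : ℝ)) (η a))
      = Set.indicator ((fun a => η a) ⁻¹' T) (fun _ => (1 : ℝ)) := by
    ext a; by_cases hmem : η a ∈ T <;> simp [Set.indicator_apply, hmem]
  rw [h, integral_indicator_const (1 : ℝ) (hηmeas hT)]
  simp only [smul_eq_mul, mul_one]; rfl

lemma ind_mul_ind {X : Type*} (T U : Set X) (g : X) :
    T.indicator (fun _ => (1 : ℝ)) g * U.indicator (fun _ => (1 : ℝ)) g
      = (T ∩ U).indicator (fun _ => (1 : ℝ)) g := by
  by_cases h1 : g ∈ T <;> by_cases h2 : g ∈ U <;>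
    simp [Set.indicator_apply, h1, h2]

lemma rod_step {d R : ℕ} {S Ω : Type*} [MeasurableSpace S] [MeasurableSpace Ω]
    (P : Measure Ω) [IsProbabilityMeasure P]
    (ω : Ω → Pt d → S) (η : Ω → Pt d → Bool)
    (hωmeas : Measurable fun a => ω a) (hηmeas : Measurable fun a => η a)
    {α c₃ : ℝ} (hTI : TransInv P ω η) (hdec : Decoupling d R P η α c₃)
    (r : ℕ) (hr : 1 ≤ r) :
    (P {a | η a ∈ rodSet d 0 0 ((3 * r : ℕ) : ℤ)}).toReal
      ≤ (P {a | η a ∈ rodSet d 0 0 ((r : ℕ) : ℤ)}).toReal ^ 2 + c₃ * (r : ℝ) ^ (-α) := by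
  set T₁ := rodSet d 0 0 ((r : ℕ) : ℤ) with hT₁
  set T₂ := rodSet d 0 ((2 * r : ℕ) : ℤ) (((2 * r : ℕ) : ℤ) + ((r : ℕ) : ℤ)) with hT₂
  have hm₁ := measurableSet_rodSet (d := d) 0 0 ((r : ℕ) : ℤ)
  have hm₂ := measurableSet_rodSet (d := d) 0 ((2 * r : ℕ) : ℤ)
      (((2 * r : ℕ) : ℤ) + ((r : ℕ) : ℤ))
  set f₁ : (Pt d → Bool) → ℝ := T₁.indicator (fun _ => (1 : ℝ)) with hf₁
  set f₂ : (Pt d → Bool) → ℝ := T₂.indicator (fun _ => (1 : ℝ)) with hf₂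
  have key := hdec r 0 0 0 0 0 ((r : ℤ) - 1) ((2 * r : ℕ) : ℤ)
      (((2 * r : ℕ) : ℤ) + ((r : ℕ) : ℤ) - 1)
      (fun i => by simp) (fun i => by simp)
      (by omega) (by push_cast; omega) (Or.inr (by push_cast; omega))
      f₁ f₂ (measurable_const.indicator hm₁) (measurable_const.indicator hm₂)
      (fun g => by by_cases h : g ∈ T₁ <;> simp [hf₁, Set.indicator_apply, h])
      (fun g => by by_cases h : g ∈ T₂ <;> simp [hf₂, Set.indicator_apply, h])
      (by
        intro g g' hgg'
        have hmem : g ∈ T₁ ↔ g' ∈ T₁ := by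
          constructor <;> intro hg s hs1 hs2
          · rw [← hgg' (((0 : Fin d → ℤ), s) : Pt d) (fun i => ⟨le_rfl, le_rfl⟩) hs1
              (by omega)]
            exact hg s hs1 hs2
          · rw [hgg' (((0 : Fin d → ℤ), s) : Pt d) (fun i => ⟨le_rfl, le_rfl⟩) hs1
              (by omega)]
            exact hg s hs1 hs2
        by_cases h : g ∈ T₁
        · rw [hf₁, Set.indicator_of_mem h, Set.indicator_of_mem (hmem.mp h)]
        · rw [hf₁, Set.indicator_of_notMem h,
            Set.indicator_of_notMem (fun hh => h (hmem.mpr hh))])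
      (by
        intro g g' hgg'
        have hmem : g ∈ T₂ ↔ g' ∈ T₂ := by
          constructor <;> intro hg s hs1 hs2
          · rw [← hgg' (((0 : Fin d → ℤ), s) : Pt d) (fun i => ⟨le_rfl, le_rfl⟩) hs1
              (by omega)]
            exact hg s hs1 hs2
          · rw [hgg' (((0 : Fin d → ℤ), s) : Pt d) (fun i => ⟨le_rfl, le_rfl⟩) hs1
              (by omega)]
            exact hg s hs1 hs2
        by_cases h : g ∈ T₂
        · rw [hf₂, Set.indicator_of_mem h, Set.indicator_of_mem (hmem.mp h)]
        · rw [hf₂, Set.indicator_of_notMem h,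
            Set.indicator_of_notMem (fun hh => h (hmem.mpr hh))])
  have hsub : {a | η a ∈ rodSet d 0 0 ((3 * r : ℕ) : ℤ)} ⊆ {a | η a ∈ T₁ ∩ T₂} := by
    intro a ha
    constructor
    · intro s hs1 hs2; exact ha s hs1 (by push_cast at hs2 ⊢; omega)
    · intro s hs1 hs2; exact ha s (by push_cast at hs1 ⊢; omega) (by push_cast at hs2 ⊢; omega)
  have hprod : ∫ a, f₁ (η a) * f₂ (η a) ∂P = (P {a | η a ∈ T₁ ∩ T₂}).toReal := by
    have : (fun a => f₁ (η a) * f₂ (η a))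
        = fun a => (T₁ ∩ T₂).indicator (fun _ => (1 : ℝ)) (η a) := by
      ext a; exact ind_mul_ind T₁ T₂ (η a)
    rw [this, integral_ind P η hηmeas _ (hm₁.inter hm₂)]
  have hint₁ : ∫ a, f₁ (η a) ∂P = (P {a | η a ∈ T₁}).toReal :=
    integral_ind P η hηmeas _ hm₁
  have hint₂ : ∫ a, f₂ (η a) ∂P = (P {a | η a ∈ T₁}).toReal := by
    rw [integral_ind P η hηmeas _ hm₂]
    rw [rod_trans P ω η hωmeas hηmeas hTI 0 ((2 * r : ℕ) : ℤ) r]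
  have hmono : (P {a | η a ∈ rodSet d 0 0 ((3 * r : ℕ) : ℤ)}).toReal
      ≤ (P {a | η a ∈ T₁ ∩ T₂}).toReal :=
    ENNReal.toReal_mono (measure_ne_top P _) (measure_mono hsub)
  calc (P {a | η a ∈ rodSet d 0 0 ((3 * r : ℕ) : ℤ)}).toReal
      ≤ (P {a | η a ∈ T₁ ∩ T₂}).toReal := hmono
    _ = ∫ a, f₁ (η a) * f₂ (η a) ∂P := hprod.symm
    _ ≤ (∫ a, f₁ (η a) ∂P) * (∫ a, f₂ (η a) ∂P) + c₃ * (r : ℝ) ^ (-α) := key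
    _ = (P {a | η a ∈ T₁}).toReal ^ 2 + c₃ * (r : ℝ) ^ (-α) := by
        rw [hint₁, hint₂]; ring

/-- **Corollary 4.6**: with `Σ = {z : η_z = 1}`, under the `α`-decoupling property,
translation invariance and `ℙ(η₀ = 1) ≥ c₂ > 0`, there is `c₇ = c₇(α, c₃, c₂) > 0`
such that for every `w ∈ ℤ^{d+1}` and every positive integer `L`, the probability that
some point of `w + ⟦0, L-1⟧^d × {0}` is not `L`-threatened is at most `c₇ L^{-α}`. -/
theorem all_points_threatened
    {d R : ℕ} (hd : 1 ≤ d) (hR : 1 ≤ R)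
    {S Ω : Type*} [MeasurableSpace S] [MeasurableSpace Ω]
    (P : Measure Ω) [IsProbabilityMeasure P]
    (ω : Ω → Pt d → S) (η : Ω → Pt d → Bool)
    (hωmeas : Measurable fun a => ω a) (hηmeas : Measurable fun a => η a)
    (α c₂ c₃ : ℝ) (hα : 0 ≤ α) (hc₂ : 0 < c₂) (hc₃ : 0 < c₃)
    (hTI : TransInv P ω η)
    (hdec : Decoupling d R P η α c₃)
    (hη₀ : ENNReal.ofReal c₂ ≤ P {a | η a (0, 0) = true}) :
    ∃ c₇ : ℝ, 0 < c₇ ∧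
      ∀ w : Pt d, ∀ L : ℕ, 1 ≤ L →
        P {a | ∃ x : Fin d → ℤ, (∀ i, 0 ≤ x i ∧ x i ≤ (L : ℤ) - 1) ∧
            ¬ Threatened (trapSet (η a)) L (w + ((x, 0) : Pt d))}
          ≤ ENNReal.ofReal (c₇ * (L : ℝ) ^ (-α)) := by
  rcases hα.eq_or_lt with hα0 | hαpos
  · refine ⟨1, one_pos, fun w L hL => ?_⟩
    rw [← hα0]
    simp only [neg_zero, Real.rpow_zero, mul_one, ENNReal.ofReal_one]
    exact prob_le_one
  · have hc₂1 : c₂ ≤ 1 := ENNReal.ofReal_le_one.mp (hη₀.trans prob_le_one)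
    set p : ℕ → ℝ := fun n => (P {a | η a ∈ rodSet d 0 0 (n : ℤ)}).toReal with hpdef
    have hofReal : ∀ n : ℕ, P {a | η a ∈ rodSet d 0 0 (n : ℤ)} = ENNReal.ofReal (p n) :=
      fun n => (ENNReal.ofReal_toReal (measure_ne_top P _)).symm
    have hp0 : ∀ n : ℕ, 0 ≤ p n := fun n => ENNReal.toReal_nonneg
    have hpmono : ∀ m n : ℕ, m ≤ n → p n ≤ p m := by
      intro m n h
      refine ENNReal.toReal_mono (measure_ne_top P _) (measure_mono ?_)
      intro a ha s hs1 hs2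
      exact ha s hs1 (lt_of_lt_of_le hs2 (by exact_mod_cast h))
    have hp1 : p 1 ≤ 1 - c₂ := by
      have hAmeas : MeasurableSet {a | η a ((0 : Fin d → ℤ), (0 : ℤ)) = true} := by
        have h : {a | η a ((0 : Fin d → ℤ), (0 : ℤ)) = true}
            = (fun a => η a) ⁻¹'
              ((fun g : Pt d → Bool => g ((0 : Fin d → ℤ), (0 : ℤ))) ⁻¹' {true}) := rfl
        rw [h]
        exact hηmeas ((measurable_pi_apply _) (measurableSet_singleton true))
      have hsub : {a | η a ∈ rodSet d 0 0 ((1 : ℕ) : ℤ)}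
          ⊆ {a | η a ((0 : Fin d → ℤ), (0 : ℤ)) = true}ᶜ := by
        intro a ha h'
        have h0 := ha 0 le_rfl (by norm_num)
        rw [Set.mem_setOf_eq] at h'
        simp only [Prod.mk_zero_zero] at h0 h'
        simp [h'] at h0
      have hcompl : P {a | η a ((0 : Fin d → ℤ), (0 : ℤ)) = true}ᶜ
          ≤ ENNReal.ofReal (1 - c₂) := by
        rw [prob_compl_eq_one_sub hAmeas]
        calc (1 : ENNReal) - P {a | η a ((0 : Fin d → ℤ), (0 : ℤ)) = true}
            ≤ 1 - ENNReal.ofReal c₂ := tsub_le_tsub_left hη₀ 1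
          _ = ENNReal.ofReal (1 - c₂) := by
              rw [← ENNReal.ofReal_one, ← ENNReal.ofReal_sub _ hc₂.le]
      calc p 1 ≤ (P {a | η a ((0 : Fin d → ℤ), (0 : ℤ)) = true}ᶜ).toReal :=
            ENNReal.toReal_mono (measure_ne_top P _) (measure_mono hsub)
        _ ≤ (ENNReal.ofReal (1 - c₂)).toReal :=
            ENNReal.toReal_mono ENNReal.ofReal_ne_top hcompl
        _ = 1 - c₂ := ENNReal.toReal_ofReal (by linarith)
    set β := (3 : ℝ) ^ (-α) with hβ
    have hβ0 : 0 < β := Real.rpow_pos_of_pos (by norm_num) _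
    have hβ1 : β < 1 := Real.rpow_lt_one_of_one_lt_of_neg (by norm_num) (by linarith)
    have hpowid : ∀ k : ℕ, ((3 : ℝ) ^ k) ^ (-α) = β ^ k := by
      intro k
      rw [hβ, ← Real.rpow_natCast 3 k, ← Real.rpow_mul (by norm_num : (0:ℝ) ≤ 3),
        mul_comm, Real.rpow_mul (by norm_num : (0:ℝ) ≤ 3), Real.rpow_natCast]
    have hurec : ∀ k : ℕ, p (3 ^ (k + 1)) ≤ p (3 ^ k) ^ 2 + c₃ * β ^ k := by
      intro k
      have hstep := rod_step P ω η hωmeas hηmeas hTI hdec (3 ^ k)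
        (Nat.one_le_pow _ _ (by norm_num))
      have hc : ((3 ^ k : ℕ) : ℝ) = (3 : ℝ) ^ k := by push_cast; ring
      rw [hc, hpowid k] at hstep
      calc p (3 ^ (k + 1)) = p (3 * 3 ^ k) := by rw [pow_succ, mul_comm]
        _ ≤ p (3 ^ k) ^ 2 + c₃ * β ^ k := hstep
    have hq0 : (0 : ℝ) ≤ 1 - c₂ := by linarith
    have hq1 : 1 - c₂ < 1 := by linarith
    have huq : ∀ k : ℕ, p (3 ^ k) ≤ 1 - c₂ := fun k =>
      le_trans (hpmono 1 (3 ^ k) (Nat.one_le_pow _ _ (by norm_num))) hp1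
    obtain ⟨C, hC0, hC⟩ := quad_decay (1 - c₂) c₃ β hq0 hq1 hc₃ hβ0 hβ1
      (fun k => p (3 ^ k)) (fun k => hp0 _) huq hurec
    have h3α : (0 : ℝ) < (3 : ℝ) ^ α := Real.rpow_pos_of_pos (by norm_num) _
    have h2α : (0 : ℝ) < (2 : ℝ) ^ α := Real.rpow_pos_of_pos (by norm_num) _
    have hpoly : ∀ n : ℕ, 1 ≤ n → p n ≤ C * (3 : ℝ) ^ α * (n : ℝ) ^ (-α) := by
      intro n hn
      set k := Nat.log 3 n with hk
      have h1 : 3 ^ k ≤ n := Nat.pow_log_le_self 3 (by omega)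
      have h2 : n < 3 ^ (k + 1) := Nat.lt_pow_succ_log_self (by norm_num) n
      have hpn : p n ≤ C * β ^ k := le_trans (hpmono _ _ h1) (hC k)
      have hn0 : (0 : ℝ) < (n : ℝ) := by
        have : 0 < n := hn
        exact_mod_cast this
      have hcast : (n : ℝ) ≤ (3 : ℝ) ^ (k + 1) := by exact_mod_cast h2.le
      have h3 : ((3 : ℝ) ^ (k + 1)) ^ (-α) ≤ (n : ℝ) ^ (-α) :=
        Real.rpow_le_rpow_of_nonpos hn0 hcast (by linarith)
      have h4 : ((3 : ℝ) ^ (k + 1)) ^ (-α) = ((3 : ℝ) ^ k) ^ (-α) * (3 : ℝ) ^ (-α) := by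
        rw [pow_succ]
        exact Real.mul_rpow (by positivity) (by norm_num)
      have h5 : (3 : ℝ) ^ α * (3 : ℝ) ^ (-α) = 1 := by
        rw [← Real.rpow_add (by norm_num)]; simp
      have h6 : β ^ k = (3 : ℝ) ^ α * ((3 : ℝ) ^ (k + 1)) ^ (-α) := by
        rw [← hpowid k]
        linear_combination (-(3 : ℝ) ^ α) * h4 - ((3 : ℝ) ^ k) ^ (-α) * h5
      calc p n ≤ C * β ^ k := hpn
        _ = C * ((3 : ℝ) ^ α * ((3 : ℝ) ^ (k + 1)) ^ (-α)) := by rw [h6]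
        _ ≤ C * ((3 : ℝ) ^ α * (n : ℝ) ^ (-α)) := by
            have := mul_le_mul_of_nonneg_left h3 h3α.le
            nlinarith
        _ = C * (3 : ℝ) ^ α * (n : ℝ) ^ (-α) := by ring
    refine ⟨C * (3 : ℝ) ^ α * (2 : ℝ) ^ α, by positivity, fun w L hL => ?_⟩
    set m := L / 2 with hm
    set n := L - m + 1 with hndef
    have hmn : m + n = L + 1 := by omega
    have h2m : L ≤ 2 * m + 1 := by omega
    have h2n : L ≤ 2 * n := by omega
    have hn1 : 1 ≤ n := by omega
    set cv : Fin d → ℤ := fun _ => (m : ℤ) with hcv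
    have hsub : {a | ∃ x : Fin d → ℤ, (∀ i, 0 ≤ x i ∧ x i ≤ (L : ℤ) - 1) ∧
            ¬ Threatened (trapSet (η a)) L (w + ((x, 0) : Pt d))}
        ⊆ {a | η a ∈ rodSet d (w.1 + cv) (w.2 + (m : ℤ)) ((w.2 + (m : ℤ)) + (n : ℤ))} := by
      intro a ha
      obtain ⟨x, hx, hnt⟩ := ha
      intro s hs1 hs2
      by_contra hfalse
      have htrap : η a (w.1 + cv, s) = true := by
        revert hfalse; cases η a (w.1 + cv, s) <;> simp
      apply hnt
      have hz : w + ((x, (0 : ℤ)) : Pt d) = (w.1 + x, w.2) := by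
        show (w.1 + x, w.2 + 0) = (w.1 + x, w.2)
        rw [add_zero]
      rw [hz]
      have e1 : (m : ℤ) + (n : ℤ) = (L : ℤ) + 1 := by exact_mod_cast hmn
      have e2 : (L : ℤ) ≤ 2 * (m : ℤ) + 1 := by exact_mod_cast h2m
      have e3 : (0 : ℤ) ≤ (m : ℤ) := Int.natCast_nonneg m
      refine ⟨fun t => (fun i => moveToward (w.1 i + x i) (w.1 i + (m : ℤ)) (t - w.2), t),
        ⟨fun t _ _ => rfl, ?_⟩, ?_, s, ?_, ?_, ?_⟩
      · intro t ht1 ht2 i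
        simp only
        have harg : t + 1 - w.2 = (t - w.2) + 1 := by ring
        rw [harg]
        simpa using moveToward_lip (w.1 i + x i) (w.1 i + (m : ℤ)) (t - w.2)
      · show ((fun i => moveToward (w.1 i + x i) (w.1 i + (m : ℤ)) (w.2 - w.2)), w.2)
            = (w.1 + x, w.2)
        have hfun : (fun i => moveToward (w.1 i + x i) (w.1 i + (m : ℤ)) (w.2 - w.2))
            = w.1 + x := by
          funext i
          rw [sub_self, moveToward_zero]
          rfl
        rw [hfun]
      · show w.2 ≤ s
        omega
      · show s ≤ w.2 + (L : ℤ)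
        omega
      · have hσ : (fun i => moveToward (w.1 i + x i) (w.1 i + (m : ℤ)) (s - w.2))
            = w.1 + cv := by
          funext i
          obtain ⟨hxi1, hxi2⟩ := hx i
          show moveToward (w.1 i + x i) (w.1 i + (m : ℤ)) (s - w.2) = w.1 i + (m : ℤ)
          apply moveToward_eq
          rw [abs_le]
          constructor <;> omega
        show η a ((fun i => moveToward (w.1 i + x i) (w.1 i + (m : ℤ)) (s - w.2)), s) = true
        rw [hσ]
        exact htrap
    have hL0 : (0 : ℝ) < (L : ℝ) := by
      have : 0 < L := hL
      exact_mod_cast this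
    have hhalf : (L : ℝ) / 2 ≤ (n : ℝ) := by
      have : (L : ℝ) ≤ 2 * (n : ℝ) := by exact_mod_cast h2n
      linarith
    have h6 : (n : ℝ) ^ (-α) ≤ ((L : ℝ) / 2) ^ (-α) :=
      Real.rpow_le_rpow_of_nonpos (by positivity) hhalf (by linarith)
    have h7 : ((L : ℝ) / 2) ^ (-α) = (L : ℝ) ^ (-α) * (2 : ℝ) ^ α := by
      rw [Real.div_rpow hL0.le (by norm_num), Real.rpow_neg (by norm_num : (0:ℝ) ≤ 2),
        div_eq_mul_inv, inv_inv]
    have hfinal : p n ≤ C * (3 : ℝ) ^ α * (2 : ℝ) ^ α * (L : ℝ) ^ (-α) := by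
      calc p n ≤ C * (3 : ℝ) ^ α * (n : ℝ) ^ (-α) := hpoly n hn1
        _ ≤ C * (3 : ℝ) ^ α * ((L : ℝ) ^ (-α) * (2 : ℝ) ^ α) := by
            rw [← h7]
            have := mul_le_mul_of_nonneg_left h6 (by positivity : (0:ℝ) ≤ C * (3:ℝ) ^ α)
            linarith
        _ = C * (3 : ℝ) ^ α * (2 : ℝ) ^ α * (L : ℝ) ^ (-α) := by ring
    calc P {a | ∃ x : Fin d → ℤ, (∀ i, 0 ≤ x i ∧ x i ≤ (L : ℤ) - 1) ∧
            ¬ Threatened (trapSet (η a)) L (w + ((x, 0) : Pt d))}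
        ≤ P {a | η a ∈ rodSet d (w.1 + cv) (w.2 + (m : ℤ)) ((w.2 + (m : ℤ)) + (n : ℤ))} :=
          measure_mono hsub
      _ = P {a | η a ∈ rodSet d 0 0 (n : ℤ)} :=
          rod_trans P ω η hωmeas hηmeas hTI (w.1 + cv) (w.2 + (m : ℤ)) n
      _ = ENNReal.ofReal (p n) := hofReal n
      _ ≤ ENNReal.ofReal (C * (3 : ℝ) ^ α * (2 : ℝ) ^ α * (L : ℝ) ^ (-α)) :=
          ENNReal.ofReal_le_ofReal hfinal

end RWRE
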